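/- Let (bₙ) be a strictly increasing sequence of positive reals with f(bₙ) > bₙ and b_{n+1} > 3 f(bₙ) for all n. Define g : ℝ → ℝ by g(t) = t for t ≤ b₁, and on each interval J_k = [b_k, b_{k+1}], g is the PL map fixing the endpoints with exactly one break point at f(b_k), where g(f(b_k)) = (b_k + f(b_k))/2. Then g is a PL homeomorphism of ℝ all of whose slopes lie in the interval [1/2, 5/4]. -/

import Mathlib

/-- `f` is a `K`-quasi-isometric embedding. -/
def QIEmb {X Y : Type*} [PseudoMetricSpace X] [PseudoMetricSpace Y] (K : ℝ) (f : X → Y) : Prop :=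
  1 < K ∧ ∀ x₁ x₂ : X, dist x₁ x₂ / K - K ≤ dist (f x₁) (f x₂) ∧
    dist (f x₁) (f x₂) ≤ K * dist x₁ x₂ + K

/-- `f` is a `K`-quasi-isometry: a `K`-quasi-isometric embedding with `K`-dense image. -/
def QIsom {X Y : Type*} [PseudoMetricSpace X] [PseudoMetricSpace Y] (K : ℝ) (f : X → Y) : Prop :=
  QIEmb K f ∧ ∀ y : Y, ∃ x : X, dist (f x) y < K

/-- `f` is a quasi-isometry for some constant `K > 1`. -/
def IsQI {X Y : Type*} [PseudoMetricSpace X] [PseudoMetricSpace Y] (f : X → Y) : Prop :=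
  ∃ K : ℝ, QIsom K f

/-- Two maps are equivalent (close) if they are within bounded sup-distance. -/
def Close {X Y : Type*} [PseudoMetricSpace X] [PseudoMetricSpace Y] (f g : X → Y) : Prop :=
  ∃ M : ℝ, ∀ x : X, dist (f x) (g x) ≤ M

/-- `f` is piecewise linear: near every point it is affine on both sides
(so the break points form a discrete set). -/
def IsPL (f : ℝ → ℝ) : Prop :=
  ∀ x : ℝ, ∃ ε > (0:ℝ), ∃ a b c d : ℝ,
    (∀ t ∈ Set.Icc (x - ε) x, f t = a * t + b) ∧
    (∀ t ∈ Set.Icc x (x + ε), f t = c * t + d)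

/-- The set of slopes `Λ(f)` of a piecewise linear map. -/
def slopes (f : ℝ → ℝ) : Set ℝ :=
  {a : ℝ | ∃ b x y : ℝ, x < y ∧ ∀ t ∈ Set.Icc x y, f t = a * t + b}

/-- `f ∈ PL_δ(ℝ)`: a piecewise linear homeomorphism of `ℝ` whose slope set is bounded
away from `0` and `∞`. -/
def IsPLd (f : ℝ → ℝ) : Prop :=
  IsPL f ∧ Function.Bijective f ∧
    ∃ M : ℝ, 1 < M ∧ ∀ a ∈ slopes f, M⁻¹ < |a| ∧ |a| < M

/-- `f` is the identity near `-∞`. -/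
def IdNearNegInf (f : ℝ → ℝ) : Prop := ∃ N : ℝ, ∀ t ≤ N, f t = t

/-- `f` is the identity near `+∞`. -/
def IdNearPosInf (f : ℝ → ℝ) : Prop := ∃ N : ℝ, ∀ t ≥ N, f t = t

/-- The midpoint-displacement map: `g = id` on `(-∞, b 0]`; on each `[b k, b (k+1)]`, `g`
fixes the endpoints, is affine with slope `1/2` on `[b k, f (b k)]` (sending `f (b k)` to
the midpoint `(b k + f (b k))/2`) and affine on `[f (b k), b (k+1)]`. -/
def MidSpec (f : ℝ → ℝ) (b : ℕ → ℝ) (g : ℝ → ℝ) : Prop :=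
  (∀ t ≤ b 0, g t = t) ∧
  ∀ k : ℕ,
    (∀ t ∈ Set.Icc (b k) (f (b k)), g t = b k + (t - b k) / 2) ∧
    (∀ t ∈ Set.Icc (f (b k)) (b (k + 1)),
      g t = (b k + f (b k)) / 2 +
        ((b (k + 1) - (b k + f (b k)) / 2) / (b (k + 1) - f (b k))) * (t - f (b k)))

/-!
On `(-∞, b 0]` the map `g` is the identity, and each `[b k, b (k + 1)]` splits at `f (b k)` into
two pieces on which `g` is affine, with slopes `1/2` and
`1 + (f (b k) - b k) / (2 (b (k + 1) - f (b k)))`; the gap condition puts the second one in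
`(1, 5/4)`. Since `b (k + 1) > 3 b k`, these pieces cover `ℝ`, so `g` is PL with slopes in
`[1/2, 5/4]`. Comparing right derivatives, a PL map all of whose slopes are at least `c > 0`
satisfies `g y - g x ≥ c (y - x)`; being continuous, it is then a bijection of `ℝ`.
-/

open Set Filter Topology

theorem exists_mem_Ico_of_monotone {β : Type*} [LinearOrder β] {b : ℕ → β}
    (hmono : Monotone b) (hunb : ¬BddAbove (range b)) {x : β}
    (hx : b 0 ≤ x) : ∃ k, x ∈ Ico (b k) (b (k + 1)) := by
  have : x ∈ ⋃ k, Ico (b k) (b (Order.succ k)) := by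
    rw [iUnion_Ico_map_succ_eq_Ici (fun k => hmono (Nat.zero_le k)) hunb]
    exact hx
  simpa using this

theorem exists_mem_Ioc_of_monotone {β : Type*} [LinearOrder β] {b : ℕ → β}
    (hmono : Monotone b) (hunb : ¬BddAbove (range b)) {x : β}
    (hx : b 0 < x) : ∃ k, x ∈ Ioc (b k) (b (k + 1)) := by
  have : x ∈ ⋃ k, Ioc (b k) (b (Order.succ k)) := by
    rw [iUnion_Ioc_map_succ_eq_Ioi (fun k => hmono (Nat.zero_le k)) hunb]
    exact hx
  simpa using this

theorem hasDerivWithinAt_of_eqOn_affine {f : ℝ → ℝ} {s t : Set ℝ} {x a c : ℝ}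
    (hs : s ∈ 𝓝[t] x) (hx : x ∈ s) (hf : ∀ y ∈ s, f y = a * y + c) :
    HasDerivWithinAt f a t x := by
  have : HasDerivAt (fun y => a * y + c) a x := by
    simpa using ((hasDerivAt_id x).const_mul a).add_const c
  exact this.hasDerivWithinAt.congr_of_eventuallyEq (eventually_of_mem hs hf) (hf x hx)

theorem isPL_of_forall_exists_affine {f : ℝ → ℝ}
    (hl : ∀ x, ∃ u < x, ∃ a c, ∀ t ∈ Icc u x, f t = a * t + c)
    (hr : ∀ x, ∃ v > x, ∃ a c, ∀ t ∈ Icc x v, f t = a * t + c) : IsPL f := by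
  intro x
  obtain ⟨u, hu, a, b, hab⟩ := hl x
  obtain ⟨v, hv, c, d, hcd⟩ := hr x
  refine ⟨min (x - u) (v - x), lt_min (sub_pos.2 hu) (sub_pos.2 hv), a, b, c, d,
    fun t ht => hab t ⟨?_, ht.2⟩, fun t ht => hcd t ⟨ht.1, ?_⟩⟩
  · linarith [ht.1, min_le_left (x - u) (v - x)]
  · linarith [ht.2, min_le_right (x - u) (v - x)]

theorem slopes_subset_of_forall_exists_affine {f : ℝ → ℝ} {S : Set ℝ}
    (h : ∀ x, ∃ v > x, ∃ a ∈ S, ∃ c, ∀ t ∈ Icc x v, f t = a * t + c) :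
    slopes f ⊆ S := by
  rintro a ⟨c, x, y, hxy, hfa⟩
  obtain ⟨v, hv, a', ha', c', hfa'⟩ := h x
  have hxm : x < min y v := lt_min hxy hv
  have hmx : min y v - x ≠ 0 := sub_ne_zero.2 hxm.ne'
  have : a * (min y v - x) = a' * (min y v - x) := by
    linear_combination hfa' (min y v) ⟨hxm.le, min_le_right _ _⟩
      - hfa (min y v) ⟨hxm.le, min_le_left _ _⟩ + hfa x ⟨le_rfl, hxy.le⟩
      - hfa' x ⟨le_rfl, hv.le⟩
  rwa [mul_right_cancel₀ hmx this]

namespace IsPL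

variable {f : ℝ → ℝ}

theorem continuous (hf : IsPL f) : Continuous f := by
  refine continuous_iff_continuousAt.2 fun x => ?_
  obtain ⟨ε, hε, a, b, c, d, hl, hr⟩ := hf x
  refine continuousAt_iff_continuous_left_right.2 ⟨?_, ?_⟩
  · exact (hasDerivWithinAt_of_eqOn_affine (Icc_mem_nhdsLE (by linarith))
      ⟨by linarith, le_rfl⟩ hl).continuousWithinAt
  · exact (hasDerivWithinAt_of_eqOn_affine (Icc_mem_nhdsGE (by linarith))
      ⟨le_rfl, by linarith⟩ hr).continuousWithinAt

theorem exists_hasDerivWithinAt_Ici (hf : IsPL f) (x : ℝ) :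
    ∃ a ∈ slopes f, HasDerivWithinAt f a (Ici x) x := by
  obtain ⟨ε, hε, -, -, a, c, -, hr⟩ := hf x
  exact ⟨a, ⟨c, x, x + ε, by linarith, hr⟩,
    hasDerivWithinAt_of_eqOn_affine (Icc_mem_nhdsGE (by linarith)) ⟨le_rfl, by linarith⟩
      hr⟩

theorem mul_sub_le_sub {c x y : ℝ} (hf : IsPL f) (hc : ∀ a ∈ slopes f, c ≤ a) (hxy : x ≤ y) :
    c * (y - x) ≤ f y - f x := by
  choose f' hf'_mem hf' using hf.exists_hasDerivWithinAt_Ici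
  have hline (t : ℝ) : HasDerivWithinAt (fun s => f x + c * (s - x)) c (Ici t) t := by
    simpa using (((hasDerivAt_id t).sub_const x).const_mul c).const_add (f x) |>.hasDerivWithinAt
  have := image_le_of_deriv_right_le_deriv_boundary (by fun_prop) (fun t _ => hline t)
    (by simp) hf.continuous.continuousOn (fun t _ => hf' t) (fun t _ => hc _ (hf'_mem t))
    ⟨hxy, le_rfl⟩
  linarith

theorem bijective_of_pos_le_slopes {c : ℝ} (hf : IsPL f) (hc : 0 < c)
    (hslopes : ∀ a ∈ slopes f, c ≤ a) : Function.Bijective f := by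
  have hexp {x y : ℝ} (hxy : x ≤ y) : c * (y - x) ≤ f y - f x :=
    hf.mul_sub_le_sub hslopes hxy
  have hmono : StrictMono f := fun x y hxy => by
    nlinarith [hexp hxy.le, mul_pos hc (sub_pos.2 hxy)]
  refine ⟨hmono.injective, hf.continuous.surjective ?_ ?_⟩
  · refine tendsto_atTop_mono' _ ?_
      (tendsto_atTop_add_const_left _ (f 0) (tendsto_id.const_mul_atTop hc))
    filter_upwards [eventually_ge_atTop 0] with y hy
    rw [id]
    linarith [hexp hy]
  · refine tendsto_atBot_mono' _ ?_
      (tendsto_atBot_add_const_left _ (f 0) (tendsto_id.const_mul_atBot hc))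
    filter_upwards [eventually_le_atBot 0] with y hy
    rw [id]
    linarith [hexp hy]

end IsPL

theorem div_sub_midpoint_mem_Icc {u v w : ℝ} (hu : 0 < u) (huv : u < v) (hvw : 3 * v < w) :
    (w - (u + v) / 2) / (w - v) ∈ Icc (1 / 2 : ℝ) (5 / 4) := by
  have hd : 0 < w - v := by linarith
  rw [mem_Icc, le_div_iff₀ hd, div_le_iff₀ hd]
  constructor <;> linarith

namespace MidSpec

variable {f : ℝ → ℝ} {b : ℕ → ℝ} {g : ℝ → ℝ}

theorem eq_on_first_piece (hg : MidSpec f b g) (k : ℕ) :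
    ∀ t ∈ Icc (b k) (f (b k)), g t = 1 / 2 * t + b k / 2 := fun t ht => by
  rw [(hg.2 k).1 t ht]; ring

theorem exists_eq_on_second_piece (hg : MidSpec f b g) (k : ℕ) :
    ∃ c, ∀ t ∈ Icc (f (b k)) (b (k + 1)),
      g t = (b (k + 1) - (b k + f (b k)) / 2) / (b (k + 1) - f (b k)) * t + c :=
  ⟨(b k + f (b k)) / 2 -
      (b (k + 1) - (b k + f (b k)) / 2) / (b (k + 1) - f (b k)) * f (b k),
    fun t ht => by rw [(hg.2 k).2 t ht]; ring⟩

theorem exists_affine_Icc_left (hg : MidSpec f b g) (hmono : Monotone b)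
    (hunb : ¬BddAbove (range b)) (x : ℝ) :
    ∃ u < x, ∃ a c, ∀ t ∈ Icc u x, g t = a * t + c := by
  rcases le_or_gt x (b 0) with hx | hx
  · exact ⟨x - 1, by linarith, 1, 0, fun t ht => by rw [hg.1 t (ht.2.trans hx)]; ring⟩
  obtain ⟨k, hk⟩ := exists_mem_Ioc_of_monotone hmono hunb hx
  rcases le_or_gt x (f (b k)) with hxf | hxf
  · exact ⟨b k, hk.1, _, _, fun t ht => hg.eq_on_first_piece k t ⟨ht.1, ht.2.trans hxf⟩⟩
  · obtain ⟨c, hc⟩ := hg.exists_eq_on_second_piece k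
    exact ⟨f (b k), hxf, _, c, fun t ht => hc t ⟨ht.1, ht.2.trans hk.2⟩⟩

theorem exists_affine_Icc_right (hg : MidSpec f b g) (hmono : Monotone b)
    (hunb : ¬BddAbove (range b)) (hpos : ∀ n, 0 < b n) (hfb : ∀ n, b n < f (b n))
    (hgap : ∀ n, 3 * f (b n) < b (n + 1)) (x : ℝ) :
    ∃ v > x, ∃ a ∈ Icc (1 / 2 : ℝ) (5 / 4), ∃ c, ∀ t ∈ Icc x v, g t = a * t + c := by
  rcases lt_or_ge x (b 0) with hx | hx
  · exact ⟨b 0, hx, 1, by norm_num, 0, fun t ht => by rw [hg.1 t ht.2]; ring⟩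
  obtain ⟨k, hk⟩ := exists_mem_Ico_of_monotone hmono hunb hx
  rcases lt_or_ge x (f (b k)) with hxf | hxf
  · exact ⟨f (b k), hxf, 1 / 2, by norm_num, _,
      fun t ht => hg.eq_on_first_piece k t ⟨hk.1.trans ht.1, ht.2⟩⟩
  · obtain ⟨c, hc⟩ := hg.exists_eq_on_second_piece k
    exact ⟨b (k + 1), hk.2, _, div_sub_midpoint_mem_Icc (hpos k) (hfb k) (hgap k), c,
      fun t ht => hc t ⟨hxf.trans ht.1, ht.2⟩⟩

end MidSpec

theorem midspec_is_PL_homeo_general (f : ℝ → ℝ) (b : ℕ → ℝ) (hb : StrictMono b)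
    (hpos : ∀ n, 0 < b n) (hfb : ∀ n, b n < f (b n))
    (hgap : ∀ n, 3 * f (b n) < b (n + 1))
    (g : ℝ → ℝ) (hg : MidSpec f b g) :
    IsPL g ∧ Function.Bijective g ∧ slopes g ⊆ Set.Icc (1/2 : ℝ) (5/4 : ℝ) := by
  have hunb : ¬BddAbove (range b) := not_bddAbove_of_tendsto_atTop <|
    tendsto_atTop_of_geom_le (hpos 0) (by norm_num : (1 : ℝ) < 3)
      fun n => by linarith [hfb n, hgap n]
  have hright := hg.exists_affine_Icc_right hb.monotone hunb hpos hfb hgap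
  have hslopes : slopes g ⊆ Icc (1 / 2 : ℝ) (5 / 4) :=
    slopes_subset_of_forall_exists_affine hright
  have hpl : IsPL g := isPL_of_forall_exists_affine
    (hg.exists_affine_Icc_left hb.monotone hunb)
    fun x => (hright x).imp fun _ ⟨hv, a, _, c, h⟩ => ⟨hv, a, c, h⟩
  exact ⟨hpl, hpl.bijective_of_pos_le_slopes (by norm_num) fun a ha => (hslopes ha).1, hslopes⟩

/-- Given an increasing homeomorphism `f` of `ℝ` and a sequence `bₙ > 0` with
`f (bₙ) > bₙ` and `b_{n+1} > 3 f (bₙ)`, the map `g` specified by `MidSpec` is a PL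
homeomorphism of `ℝ` all of whose slopes lie in `[1/2, 5/4]`. -/
theorem midspec_is_PL_homeo (f : ℝ → ℝ) (hmono : StrictMono f)
    (hbij : Function.Bijective f) (b : ℕ → ℝ) (hb : StrictMono b)
    (hpos : ∀ n, 0 < b n) (hfb : ∀ n, b n < f (b n))
    (hgap : ∀ n, 3 * f (b n) < b (n + 1))
    (g : ℝ → ℝ) (hg : MidSpec f b g) :
    IsPL g ∧ Function.Bijective g ∧ slopes g ⊆ Set.Icc (1/2 : ℝ) (5/4 : ℝ) :=
  midspec_is_PL_homeo_general f b hb hpos hfb hgap g hg
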